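/- Let ρ be a density matrix on ℂ^{d_1} ⊗ … ⊗ ℂ^{d_n}, let P_s be an orthogonal projection on ℂ^{d_s} for each s, set Q = P_1 ⊗ … ⊗ P_n and c = Tr(Qρ). If c > 0, then the renormalized projected state ρ' = QρQ/c satisfies ‖ρ − ρ'‖₁ ≤ 2 √( ∑_{s=1}^{n} Tr[(I − P_s) ρ_{A_s}] ). -/

import Mathlib

/-
The union bound for commuting projections, 1 - Q ≤ ∑ₛ (1 - Qₛ) with Qₛ = Pₛ acting on the s-th
factor only, gives 1 - c = Tr[(1 - Q)ρ] ≤ ∑ₛ Tr[(1 - Pₛ)ρ_{Aₛ}], so it suffices to show the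
single-projection bound ‖ρ - QρQ/c‖₁ ≤ 2√(1 - c). Write the trace norm of the Hermitian matrix
ρ - QρQ/c as Tr[U(ρ - QρQ/c)] with U its sign, so that -1 ≤ U ≤ 1. For Xₖ = Q + k(1 - Q) the
number Tr[U Xₖ ρ Xₖ] is a quadratic polynomial in k whose absolute value is at most
Tr[Xₖ ρ Xₖ] = c + k²(1 - c); comparing it at two suitable values of k gives the bound.
-/

open scoped ENNReal ComplexOrder
open Matrix

noncomputable section

/-- A density matrix: positive semidefinite with unit trace. -/
def Matrix.IsDensity {I : Type*} [Fintype I] (ρ : Matrix I I ℂ) : Prop :=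
  ρ.PosSemidef ∧ ρ.trace = 1

/-- An orthogonal projection matrix: Hermitian and idempotent. -/
def Matrix.IsOrthoProj {I : Type*} [Fintype I] (P : Matrix I I ℂ) : Prop :=
  P.IsHermitian ∧ P * P = P

/-- The Kronecker product `P 1 ⊗ … ⊗ P n` of matrices on the factors. -/
def piKron {n : ℕ} {d : Fin n → ℕ} (P : ∀ s, Matrix (Fin (d s)) (Fin (d s)) ℂ) :
    Matrix (∀ s, Fin (d s)) (∀ s, Fin (d s)) ℂ :=
  Matrix.of fun i j => ∏ s, P s (i s) (j s)

/-- The `s`-th marginal of a multipartite matrix (partial trace over all other factors). -/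
def pmarginal {n : ℕ} {d : Fin n → ℕ}
    (ρ : Matrix (∀ s, Fin (d s)) (∀ s, Fin (d s)) ℂ) (s : Fin n) :
    Matrix (Fin (d s)) (Fin (d s)) ℂ :=
  Matrix.of fun i i' => ∑ j : ∀ t, Fin (d t), if j s = i then ρ j (Function.update j s i') else 0

/-- Matrix logarithm of a Hermitian matrix via the spectral decomposition
(with the convention `ln 0 = 0` on the kernel); junk value `0` otherwise. -/
def matLog {I : Type*} [Fintype I] [DecidableEq I] (ρ : Matrix I I ℂ) : Matrix I I ℂ :=
  if h : ρ.IsHermitian then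
    (h.eigenvectorUnitary : Matrix I I ℂ) *
      Matrix.diagonal (fun k => (Real.log (h.eigenvalues k) : ℂ)) *
      (star (h.eigenvectorUnitary : Matrix I I ℂ))
  else 0

open Classical in
/-- Quantum relative entropy `D(ρ‖σ) ∈ [0,∞]`:
`Tr[ρ(ln ρ − ln σ)]` if `range ρ ⊆ range σ`, and `+∞` otherwise. -/
def qRelEnt {I : Type*} [Fintype I] [DecidableEq I] (ρ σ : Matrix I I ℂ) : ℝ≥0∞ :=
  if Set.range ρ.mulVec ⊆ Set.range σ.mulVec then
    ENNReal.ofReal ((ρ * (matLog ρ - matLog σ)).trace.re)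
  else ∞

/-- Separable states: convex hull of product density matrices. -/
def IsSepState {n : ℕ} {d : Fin n → ℕ}
    (σ : Matrix (∀ s, Fin (d s)) (∀ s, Fin (d s)) ℂ) : Prop :=
  σ ∈ convexHull ℝ
    {τ | ∃ P : ∀ s, Matrix (Fin (d s)) (Fin (d s)) ℂ, (∀ s, (P s).IsDensity) ∧ τ = piKron P}

/-- The relative entropy of entanglement `E_R(ρ) = inf { D(ρ‖σ) : σ separable }`. -/
def relEntEnt {n : ℕ} {d : Fin n → ℕ}
    (ρ : Matrix (∀ s, Fin (d s)) (∀ s, Fin (d s)) ℂ) : ℝ≥0∞ :=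
  ⨅ (σ : Matrix (∀ s, Fin (d s)) (∀ s, Fin (d s)) ℂ) (_ : IsSepState σ), qRelEnt ρ σ

/-- Von Neumann entropy `H(ρ) = −∑ λ_k ln λ_k` (junk value `0` for non-Hermitian input). -/
def vnEntropy {I : Type*} [Fintype I] [DecidableEq I] (ρ : Matrix I I ℂ) : ℝ :=
  if h : ρ.IsHermitian then -∑ k, h.eigenvalues k * Real.log (h.eigenvalues k) else 0

/-- Trace norm `‖A‖₁ = Tr √(AᴴA)`. -/
def traceNorm {I : Type*} [Fintype I] [DecidableEq I] (A : Matrix I I ℂ) : ℝ :=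
  (((Matrix.posSemidef_conjTranspose_mul_self A).1.eigenvectorUnitary : Matrix I I ℂ) *
      Matrix.diagonal (fun k => ((Real.sqrt ((Matrix.posSemidef_conjTranspose_mul_self A).1.eigenvalues k) : ℝ) : ℂ)) *
      (star (Matrix.posSemidef_conjTranspose_mul_self A).1.eigenvectorUnitary : Matrix I I ℂ)).trace.re

end

theorem le_two_mul_of_abs_quadratic_le {u x y z : ℝ} (hu0 : 0 < u) (hu1 : u < 1)
    (h : ∀ k : ℝ, |x + k * y + k ^ 2 * z| ≤ 1 - u ^ 2 + k ^ 2 * u ^ 2) :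
    x + y + z - (1 - u ^ 2)⁻¹ * x ≤ 2 * u := by
  -- the upper bound at k = (1 + u)/u and the lower bound at k = -(1 - u)/u, weighted by
  -- (1 - u)/2 and (1 + u)/2, add up to the claim
  have hup := (abs_le.mp (h ((1 + u) / u))).2
  have hlow := (abs_le.mp (h (-(1 - u) / u))).1
  have hc : 0 < 1 - u ^ 2 := by nlinarith
  field_simp at hup hlow ⊢
  refine le_of_mul_le_mul_left ?_ hu0
  have h₁ : 0 ≤ (1 - u) / 2 := by linarith
  have h₂ : 0 ≤ (1 + u) / 2 := by linarith
  linear_combination (mul_le_mul_of_nonneg_left hup h₁) + (mul_le_mul_of_nonneg_left hlow h₂)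

section MatrixFacts

variable {I : Type*} [Fintype I]

open scoped MatrixOrder

theorem Matrix.PosSemidef.exists_eq_mul_conjTranspose [DecidableEq I] {A : Matrix I I ℂ}
    (hA : A.PosSemidef) : ∃ S : Matrix I I ℂ, A = S * Sᴴ :=
  ⟨CFC.sqrt A, by rw [(CFC.sqrt_nonneg A).posSemidef.1.eq, CFC.sqrt_mul_sqrt_self A hA.nonneg]⟩

theorem Matrix.PosSemidef.re_trace_mul_nonneg [DecidableEq I] {A B : Matrix I I ℂ}
    (hA : A.PosSemidef) (hB : B.PosSemidef) : 0 ≤ (A * B).trace.re := by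
  obtain ⟨S, rfl⟩ := hB.exists_eq_mul_conjTranspose
  rw [← Matrix.mul_assoc, trace_mul_cycle]
  exact (Complex.nonneg_iff.mp (hA.conjTranspose_mul_mul_same S).trace_nonneg).1

theorem Matrix.PosSemidef.eq_zero_of_re_trace_eq_zero {A : Matrix I I ℂ} (hA : A.PosSemidef)
    (h : A.trace.re = 0) : A = 0 :=
  hA.trace_eq_zero_iff.mp (Complex.ext h (Complex.nonneg_iff.mp hA.trace_nonneg).2.symm)

theorem abs_re_trace_mul_le [DecidableEq I] {U M : Matrix I I ℂ} (hU₁ : (1 - U).PosSemidef)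
    (hU₂ : (1 + U).PosSemidef) (hM : M.PosSemidef) : |(U * M).trace.re| ≤ M.trace.re := by
  have h₁ := hU₁.re_trace_mul_nonneg hM
  have h₂ := hU₂.re_trace_mul_nonneg hM
  rw [sub_mul, Matrix.one_mul, trace_sub, Complex.sub_re] at h₁
  rw [add_mul, Matrix.one_mul, trace_add, Complex.add_re] at h₂
  exact abs_le.mpr ⟨by linarith, by linarith⟩

namespace Matrix.IsOrthoProj

variable {P Q : Matrix I I ℂ}

theorem posSemidef (hP : P.IsOrthoProj) : P.PosSemidef := by
  simpa only [hP.1.eq, hP.2] using posSemidef_conjTranspose_mul_self P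

theorem one_sub [DecidableEq I] (hP : P.IsOrthoProj) : (1 - P).IsOrthoProj :=
  ⟨by simp [IsHermitian, hP.1.eq],
    by rw [sub_mul, Matrix.one_mul, mul_sub, Matrix.mul_one, hP.2, sub_self, sub_zero]⟩

theorem mul (hP : P.IsOrthoProj) (hQ : Q.IsOrthoProj) (hPQ : Commute P Q) :
    (P * Q).IsOrthoProj :=
  ⟨by rw [IsHermitian, conjTranspose_mul, hP.1.eq, hQ.1.eq, hPQ.eq],
    by rw [← Matrix.mul_assoc, Matrix.mul_assoc P Q P, ← hPQ.eq, ← Matrix.mul_assoc, hP.2,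
      Matrix.mul_assoc, hQ.2]⟩

theorem mul_eq_zero_of_re_trace_mul_eq_zero [DecidableEq I] {ρ : Matrix I I ℂ}
    (hP : P.IsOrthoProj) (hρ : ρ.PosSemidef) (h : (P * ρ).trace.re = 0) : P * ρ = 0 := by
  obtain ⟨S, rfl⟩ := hρ.exists_eq_mul_conjTranspose
  have hPS : P * S * (P * S)ᴴ = 0 := by
    refine (posSemidef_self_mul_conjTranspose _).eq_zero_of_re_trace_eq_zero ?_
    rwa [conjTranspose_mul, hP.1.eq, ← Matrix.mul_assoc, trace_mul_cycle, ← Matrix.mul_assoc, hP.2,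
      Matrix.mul_assoc]
  rw [← Matrix.mul_assoc, self_mul_conjTranspose_eq_zero.mp hPS, Matrix.zero_mul]

theorem re_trace_one_sub_mul_mul_le [DecidableEq I] {ρ : Matrix I I ℂ} (hP : P.IsOrthoProj)
    (hQ : Q.IsOrthoProj) (hPQ : Commute P Q) (hρ : ρ.PosSemidef) :
    ((1 - P * Q) * ρ).trace.re ≤ ((1 - P) * ρ).trace.re + ((1 - Q) * ρ).trace.re := by
  have hcomm : Commute (1 - P) (1 - Q) :=
    (Commute.one_right _).sub_right ((Commute.one_left Q).sub_left hPQ)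
  have hnonneg := ((hP.one_sub.mul hQ.one_sub hcomm).posSemidef).re_trace_mul_nonneg hρ
  have hsplit : 1 - P * Q = (1 - P) + (1 - Q) - (1 - P) * (1 - Q) := by noncomm_ring
  rw [hsplit, sub_mul, add_mul, trace_sub, trace_add, Complex.sub_re, Complex.add_re]
  linarith

end Matrix.IsOrthoProj

theorem traceNorm_eq_re_trace_cfc_sqrt [DecidableEq I] (A : Matrix I I ℂ) :
    traceNorm A = (cfc Real.sqrt (Aᴴ * A)).trace.re := by
  rw [(isHermitian_conjTranspose_mul_self A).cfc_eq, IsHermitian.cfc,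
    Unitary.conjStarAlgAut_apply]
  rfl

namespace Matrix.IsHermitian

variable [DecidableEq I] {D : Matrix I I ℂ}

theorem cfc_mul_id (hD : D.IsHermitian) (f : ℝ → ℝ) :
    cfc (fun x => f x * x) D = cfc f D * D := by
  have hf : ContinuousOn f (spectrum ℝ D) := D.finite_real_spectrum.continuousOn _
  rw [cfc_mul .., cfc_id' ℝ D]

theorem traceNorm_eq_re_trace_cfc_sign_mul (hD : D.IsHermitian) :
    traceNorm D = (cfc Real.sign D * D).trace.re := by
  have habs (x : ℝ) : Real.sqrt (x ^ 2) = Real.sign x * x := by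
    rw [Real.sqrt_sq_eq_abs]
    rcases lt_trichotomy x 0 with h | rfl | h
    · simp [Real.sign_of_neg h, abs_of_neg h]
    · simp
    · simp [Real.sign_of_pos h, abs_of_pos h]
  rw [traceNorm_eq_re_trace_cfc_sqrt, hD.eq, ← sq, ← cfc_pow_id (R := ℝ) D 2, ← cfc_comp' ..,
    ← hD.cfc_mul_id]
  simp only [habs]

theorem one_sub_cfc_sign_posSemidef (hD : D.IsHermitian) : (1 - cfc Real.sign D).PosSemidef := by
  have hsign : ContinuousOn Real.sign (spectrum ℝ D) := D.finite_real_spectrum.continuousOn _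
  rw [← cfc_one ℝ D, ← cfc_sub ..]
  refine LE.le.posSemidef (cfc_nonneg fun x _ => ?_)
  rcases Real.sign_apply_eq x with h | h | h <;> simp [h]

theorem one_add_cfc_sign_posSemidef (hD : D.IsHermitian) : (1 + cfc Real.sign D).PosSemidef := by
  have hsign : ContinuousOn Real.sign (spectrum ℝ D) := D.finite_real_spectrum.continuousOn _
  rw [← cfc_one ℝ D, ← cfc_add ..]
  refine LE.le.posSemidef (cfc_nonneg fun x _ => ?_)
  rcases Real.sign_apply_eq x with h | h | h <;> simp [h]

end Matrix.IsHermitian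

theorem re_trace_mul_sub_inv_smul_le [DecidableEq I] {ρ Q U : Matrix I I ℂ} (hρ : ρ.IsDensity)
    (hQ : Q.IsOrthoProj) (hU₁ : (1 - U).PosSemidef) (hU₂ : (1 + U).PosSemidef) {u : ℝ}
    (hu0 : 0 < u) (hu1 : u < 1) (hc : (Q * ρ).trace.re = 1 - u ^ 2) :
    (U * (ρ - (1 - u ^ 2)⁻¹ • (Q * ρ * Q))).trace.re ≤ 2 * u := by
  set R := 1 - Q
  set X : ℝ → Matrix I I ℂ := fun k => Q + k • R
  have hquad (M : Matrix I I ℂ) (k : ℝ) : (M * (X k * ρ * X k)).trace.re =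
      (M * (Q * ρ * Q)).trace.re + k * (M * (Q * ρ * R + R * ρ * Q)).trace.re
        + k ^ 2 * (M * (R * ρ * R)).trace.re := by
    simp only [X, add_mul, mul_add, smul_mul_assoc, mul_smul_comm, smul_add, smul_smul, trace_add,
      trace_smul, Complex.add_re, Complex.smul_re, smul_eq_mul]
    ring
  have hnorm (k : ℝ) : (1 * (X k * ρ * X k)).trace.re = 1 - u ^ 2 + k ^ 2 * u ^ 2 := by
    have hRQ : R * Q = 0 := by simp [R, sub_mul, hQ.2]
    have hQR : Q * R = 0 := by simp [R, mul_sub, hQ.2]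
    have hRR : R * R = R := hQ.one_sub.2
    have hR : (R * ρ).trace.re = u ^ 2 := by
      simp only [R, sub_mul, Matrix.one_mul, trace_sub, Complex.sub_re, hρ.2, hc, Complex.one_re]
      ring
    have hcyc (A B : Matrix I I ℂ) : (A * ρ * B).trace = (B * A * ρ).trace := trace_mul_cycle ..
    rw [hquad]
    simp only [Matrix.one_mul, trace_add, hcyc, hQ.2, hRR, hQR, hRQ, Matrix.zero_mul,
      trace_zero, add_zero, Complex.zero_re, mul_zero, hc, hR]
  have hXherm (k : ℝ) : (X k)ᴴ = X k := by
    simp [X, R, conjTranspose_add, conjTranspose_smul, hQ.1.eq]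
  have key := le_two_mul_of_abs_quadratic_le hu0 hu1 fun k => by
    have hpsd : (X k * ρ * X k).PosSemidef := by
      simpa [hXherm] using hρ.1.mul_mul_conjTranspose_same (X k)
    have := abs_re_trace_mul_le hU₁ hU₂ hpsd
    rwa [← Matrix.one_mul (X k * ρ * X k), hnorm, Matrix.one_mul, hquad] at this
  have hX₁ : X 1 = 1 := by simp [X, R]
  have h₁ := hquad U 1
  rw [hX₁, Matrix.one_mul, Matrix.mul_one, one_mul, one_pow, one_mul] at h₁
  rw [mul_sub, trace_sub, Complex.sub_re, mul_smul_comm, trace_smul, Complex.smul_re, smul_eq_mul,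
    h₁]
  exact key

theorem traceNorm_sub_inv_smul_le [DecidableEq I] {ρ Q : Matrix I I ℂ} (hρ : ρ.IsDensity)
    (hQ : Q.IsOrthoProj) {c : ℝ} (hc : c = (Q * ρ).trace.re) (hcpos : 0 < c) :
    traceNorm (ρ - c⁻¹ • (Q * ρ * Q)) ≤ 2 * √(1 - c) := by
  have hcompl : ((1 - Q) * ρ).trace.re = 1 - c := by
    rw [hc, sub_mul, Matrix.one_mul, trace_sub, Complex.sub_re, hρ.2, Complex.one_re]
  have hc1 : c ≤ 1 := by
    linarith [hQ.one_sub.posSemidef.re_trace_mul_nonneg hρ.1]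
  rcases hc1.lt_or_eq with hlt | rfl
  · have hQρQ : (Q * ρ * Q).IsHermitian := by
      simpa [hQ.1.eq] using isHermitian_mul_mul_conjTranspose Q hρ.1.1
    have hD : (ρ - c⁻¹ • (Q * ρ * Q)).IsHermitian :=
      hρ.1.1.sub (hQρQ.smul (IsSelfAdjoint.all c⁻¹))
    have hcu : 1 - √(1 - c) ^ 2 = c := by rw [Real.sq_sqrt (by linarith)]; ring
    have := re_trace_mul_sub_inv_smul_le hρ hQ hD.one_sub_cfc_sign_posSemidef
      hD.one_add_cfc_sign_posSemidef (u := √(1 - c)) (Real.sqrt_pos.mpr (by linarith))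
      ((Real.sqrt_lt' one_pos).mpr (by linarith)) (by rw [← hc, hcu])
    rwa [hcu, ← hD.traceNorm_eq_re_trace_cfc_sign_mul] at this
  · have hQρ : Q * ρ = ρ := by
      have := hQ.one_sub.mul_eq_zero_of_re_trace_mul_eq_zero hρ.1 (by rw [hcompl, sub_self])
      rwa [sub_mul, Matrix.one_mul, sub_eq_zero, eq_comm] at this
    have hρQ : ρ * Q = ρ := by
      simpa [hρ.1.1.eq, hQ.1.eq] using congrArg conjTranspose hQρ
    rw [hQρ, hρQ, inv_one, one_smul, sub_self, isHermitian_zero.traceNorm_eq_re_trace_cfc_sign_mul]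
    simp

end MatrixFacts

section Multipartite

variable {n : ℕ} {d : Fin n → ℕ}

theorem piKron_mul (A B : ∀ s, Matrix (Fin (d s)) (Fin (d s)) ℂ) :
    piKron A * piKron B = piKron fun s => A s * B s := by
  ext i j
  simp only [piKron, mul_apply, of_apply, Finset.prod_univ_sum, Fintype.piFinset_univ,
    Finset.prod_mul_distrib]

theorem piKron_conjTranspose (A : ∀ s, Matrix (Fin (d s)) (Fin (d s)) ℂ) :
    (piKron A)ᴴ = piKron fun s => (A s)ᴴ := by
  ext i j
  simp [piKron]

theorem piKron_one : piKron (fun s => (1 : Matrix (Fin (d s)) (Fin (d s)) ℂ)) = 1 := by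
  ext i j
  simp [piKron, one_apply, Fintype.prod_boole, funext_iff]

def piKronOn (P : ∀ s, Matrix (Fin (d s)) (Fin (d s)) ℂ) (T : Finset (Fin n)) :
    Matrix (∀ s, Fin (d s)) (∀ s, Fin (d s)) ℂ :=
  piKron fun s => if s ∈ T then P s else 1

variable {P : ∀ s, Matrix (Fin (d s)) (Fin (d s)) ℂ}

theorem piKronOn_isOrthoProj (hP : ∀ s, (P s).IsOrthoProj) (T : Finset (Fin n)) :
    (piKronOn P T).IsOrthoProj := by
  refine ⟨?_, ?_⟩
  · rw [IsHermitian, piKronOn, piKron_conjTranspose]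
    congr! 2 with s
    split_ifs <;> simp [(hP s).1.eq]
  · rw [piKronOn, piKron_mul]
    congr! 2 with s
    split_ifs <;> simp [(hP s).2]

theorem piKronOn_empty : piKronOn P ∅ = 1 := by
  simp [piKronOn, piKron_one]

theorem piKronOn_univ : piKronOn P Finset.univ = piKron P := by
  simp [piKronOn]

theorem piKronOn_insert {s : Fin n} {T : Finset (Fin n)} (hs : s ∉ T) :
    piKronOn P (insert s T) = piKronOn P {s} * piKronOn P T := by
  rw [piKronOn, piKronOn, piKronOn, piKron_mul]
  congr! 2 with t
  by_cases hts : t = s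
  · subst hts; simp [hs]
  · split_ifs <;> simp_all

theorem piKronOn_commute {s : Fin n} {T : Finset (Fin n)} (hs : s ∉ T) :
    Commute (piKronOn P {s}) (piKronOn P T) := by
  rw [Commute, SemiconjBy, piKronOn, piKronOn, piKron_mul, piKron_mul]
  congr! 2 with t
  by_cases hts : t = s
  · subst hts; simp [hs]
  · split_ifs <;> simp_all

theorem piKronOn_singleton_apply (A : ∀ s, Matrix (Fin (d s)) (Fin (d s)) ℂ) (s : Fin n)
    (i j : ∀ t, Fin (d t)) :
    piKronOn A {s} i j = ∑ a, if Function.update j s a = i then A s a (j s) else 0 := by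
  simp only [Function.update_eq_iff, ite_and, Finset.sum_ite_eq', Finset.mem_univ, if_true]
  rw [piKronOn, piKron, of_apply, Fintype.prod_eq_mul_prod_compl s]
  have hrest : ∀ t ∈ ({s}ᶜ : Finset (Fin n)),
      (if t ∈ ({s} : Finset (Fin n)) then A t else 1) (i t) (j t) = if j t = i t then 1 else 0 :=
    fun t ht => by simp [Finset.mem_compl.mp ht, one_apply, eq_comm]
  rw [Finset.prod_congr rfl hrest, Finset.prod_boole]
  simp

theorem trace_piKronOn_singleton_mul (A : ∀ s, Matrix (Fin (d s)) (Fin (d s)) ℂ)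
    (ρ : Matrix (∀ s, Fin (d s)) (∀ s, Fin (d s)) ℂ) (s : Fin n) :
    (piKronOn A {s} * ρ).trace = (A s * pmarginal ρ s).trace := by
  simp only [trace, diag, mul_apply, piKronOn_singleton_apply, pmarginal, of_apply,
    Finset.sum_mul, Finset.mul_sum, ite_mul, zero_mul, mul_ite, mul_zero]
  calc _ = ∑ j, ∑ a, A s a (j s) * ρ j (Function.update j s a) := by
        rw [Finset.sum_comm]
        refine Finset.sum_congr rfl fun j _ => ?_
        rw [Finset.sum_comm]
        simp
    _ = _ := by
        rw [Finset.sum_comm]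
        refine Finset.sum_congr rfl fun a _ => ?_
        rw [Finset.sum_comm]
        simp

theorem trace_pmarginal (ρ : Matrix (∀ s, Fin (d s)) (∀ s, Fin (d s)) ℂ) (s : Fin n) :
    (pmarginal ρ s).trace = ρ.trace := by
  simpa [piKronOn, piKron_one] using (trace_piKronOn_singleton_mul (fun _ => 1) ρ s).symm

theorem re_trace_one_sub_piKronOn_mul_le (hP : ∀ s, (P s).IsOrthoProj)
    {ρ : Matrix (∀ s, Fin (d s)) (∀ s, Fin (d s)) ℂ} (hρ : ρ.PosSemidef) (T : Finset (Fin n)) :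
    ((1 - piKronOn P T) * ρ).trace.re ≤ ∑ s ∈ T, ((1 - piKronOn P {s}) * ρ).trace.re := by
  induction T using Finset.induction_on with
  | empty => simp [piKronOn_empty]
  | insert s T hs ih =>
    rw [piKronOn_insert hs, Finset.sum_insert hs]
    linarith [(piKronOn_isOrthoProj hP {s}).re_trace_one_sub_mul_mul_le
      (piKronOn_isOrthoProj hP T) (piKronOn_commute hs) hρ]

theorem re_trace_one_sub_piKron_mul_le (hP : ∀ s, (P s).IsOrthoProj)
    {ρ : Matrix (∀ s, Fin (d s)) (∀ s, Fin (d s)) ℂ} (hρ : ρ.PosSemidef) :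
    ((1 - piKron P) * ρ).trace.re ≤ ∑ s, ((1 - P s) * pmarginal ρ s).trace.re := by
  rw [← piKronOn_univ]
  refine (re_trace_one_sub_piKronOn_mul_le hP hρ _).trans_eq (Finset.sum_congr rfl fun s _ => ?_)
  rw [sub_mul, sub_mul, Matrix.one_mul, Matrix.one_mul, trace_sub, trace_sub,
    trace_piKronOn_singleton_mul, trace_pmarginal]

end Multipartite

/-- gentle measurement: `‖ρ − QρQ/c‖₁ ≤ 2√(∑ₛ Tr[(I − Pₛ) ρ_{Aₛ}])`. -/
theorem statement1 {n : ℕ} {d : Fin n → ℕ}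
    (ρ : Matrix (∀ s, Fin (d s)) (∀ s, Fin (d s)) ℂ) (hρ : ρ.IsDensity)
    (P : ∀ s, Matrix (Fin (d s)) (Fin (d s)) ℂ) (hP : ∀ s, (P s).IsOrthoProj)
    (c : ℝ) (hc : c = ((piKron P) * ρ).trace.re) (hcpos : 0 < c) :
    traceNorm (ρ - c⁻¹ • (piKron P * ρ * piKron P)) ≤
      2 * Real.sqrt (∑ s, ((1 - P s) * pmarginal ρ s).trace.re) := by
  have hQ : (piKron P).IsOrthoProj := piKronOn_univ (P := P) ▸ piKronOn_isOrthoProj hP _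
  have hunion : 1 - c ≤ ∑ s, ((1 - P s) * pmarginal ρ s).trace.re := by
    have := re_trace_one_sub_piKron_mul_le hP hρ.1
    rwa [sub_mul, Matrix.one_mul, trace_sub, Complex.sub_re, hρ.2, Complex.one_re, ← hc] at this
  calc traceNorm (ρ - c⁻¹ • (piKron P * ρ * piKron P)) ≤ 2 * √(1 - c) :=
        traceNorm_sub_inv_smul_le hρ hQ hc hcpos
    _ ≤ 2 * √(∑ s, ((1 - P s) * pmarginal ρ s).trace.re) := by gcongr
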